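/- A ring R is a right Σ-V ring if and only if R is a right V-ring and R is q.f.d. relative to every simple right R-module. -/

import Mathlib

/-!
Let `(Nᵢ)` be an infinite independent family of nonzero submodules of a cyclic module `C`, with
embeddings `Nᵢ ↪ M`. If `⊕ M` is injective, the injective map `⊕ Nᵢ → ⊕ M` extends along
`⊕ Nᵢ ↪ C`; the image of `C` is finitely generated, hence supported on finitely many
coordinates, so the extension kills some `Nᵢ`, a contradiction.

Conversely, let `M` be semisimple and injective and `f : I → ⊕ M` a map from a right ideal.
It extends to `A → ∏ M`, whose image is cyclic and contains a copy of the semisimple module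
`f(I)`. Relative q.f.d. forces `f(I)` to be a finite sum of simples, so `f` lands in a finite
subsum `⊕_T M ≅ M^T`, which is injective; Baer's criterion finishes the proof.
-/

universe u

open MulOpposite

/-- A right `A`-module `M` is Σ-injective if the direct sum of any family of copies of `M`
is injective. -/
def IsSigmaInjective (A : Type u) [Ring A] (M : Type u) [AddCommGroup M] [Module A M] : Prop :=
  ∀ ι : Type u, Module.Injective A (ι →₀ M)

/-- `R` is a right Σ-V ring: every simple right `R`-module is Σ-injective.
Right `R`-modules are modules over `Rᵐᵒᵖ`. -/
def IsRightSigmaVRing (R : Type u) [Ring R] : Prop :=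
  ∀ (S : Type u) [AddCommGroup S] [Module Rᵐᵒᵖ S],
    IsSimpleModule Rᵐᵒᵖ S → IsSigmaInjective Rᵐᵒᵖ S

/-- `R` is a right V-ring: every simple right `R`-module is injective. -/
def IsRightVRing (R : Type u) [Ring R] : Prop :=
  ∀ (S : Type u) [AddCommGroup S] [Module Rᵐᵒᵖ S],
    IsSimpleModule Rᵐᵒᵖ S → Module.Injective Rᵐᵒᵖ S

/-- `A` is q.f.d. relative to `M`: no cyclic `A`-module contains an infinite direct sum
(i.e., an infinite independent family) of nonzero submodules each isomorphic to a
submodule of `M`. -/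
def QfdRelativeTo (A : Type u) [Ring A] (M : Type u) [AddCommGroup M] [Module A M] : Prop :=
  ∀ (C : Type u) [AddCommGroup C] [Module A C], (⊤ : Submodule A C).IsPrincipal →
    ∀ N : ℕ → Submodule A C, iSupIndep N → (∀ i, N i ≠ ⊥) →
      (∀ i, ∃ K : Submodule A M, Nonempty ((N i) ≃ₗ[A] K)) → False

open Finsupp
open LinearMap (range)

theorem Submodule.FG.exists_le_supported {A ι M : Type*} [Semiring A] [AddCommMonoid M]
    [Module A M] {p : Submodule A (ι →₀ M)} (hp : p.FG) :
    ∃ T : Finset ι, p ≤ supported M A (T : Set ι) := by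
  classical
  obtain ⟨s, rfl⟩ := hp
  refine ⟨s.biUnion fun x : ι →₀ M => x.support, Submodule.span_le.mpr fun x hx => ?_⟩
  exact (mem_supported A x).mpr (Finset.coe_subset.mpr (Finset.subset_biUnion_of_mem _ hx))

theorem LinearMap.exists_submodule_linearEquiv_of_ne_zero {A N ι M : Type*} [Ring A]
    [AddCommGroup N] [Module A N] [IsSimpleModule A N] [AddCommGroup M] [Module A M]
    (g : N →ₗ[A] ι →₀ M) (hg : g ≠ 0) :
    ∃ K : Submodule A M, Nonempty (N ≃ₗ[A] K) := by
  obtain ⟨j, hj⟩ : ∃ j, lapply j ∘ₗ g ≠ 0 := by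
    by_contra! h
    exact hg (LinearMap.ext fun x => Finsupp.ext fun j => LinearMap.congr_fun (h j) x)
  exact ⟨_, ⟨.ofInjective _ ((lapply j ∘ₗ g).injective_or_eq_zero.resolve_right hj)⟩⟩

section

variable {A : Type u} [Ring A]

theorem Module.Injective.of_linearEquiv {M N : Type u} [AddCommGroup M] [AddCommGroup N]
    [Module A M] [Module A N] [Module.Injective A M] (e : M ≃ₗ[A] N) : Module.Injective A N :=
  Module.Baer.injective <| (Module.Baer.of_injective ‹_›).of_equiv e

theorem Module.injective_supported_of_finite {ι M : Type u} [AddCommGroup M] [Module A M]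
    [Module.Injective A M] {s : Set ι} (hs : s.Finite) :
    Module.Injective A (supported M A s) :=
  have := hs.to_subtype
  .of_linearEquiv ((linearEquivFunOnFinite A M s).symm.trans (supportedEquivFinsupp s).symm)

theorem IsSigmaInjective.injective {M : Type u} [AddCommGroup M] [Module A M]
    (h : IsSigmaInjective A M) : Module.Injective A M :=
  have := h PUnit
  .of_linearEquiv (uniqueLinearEquiv A M PUnit.unit)

theorem IsSigmaInjective.qfdRelativeTo {M : Type u} [AddCommGroup M] [Module A M]
    (h : IsSigmaInjective A M) : QfdRelativeTo A M := by
  intro C _ _ hC N hind hne hiso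
  choose K e using hiso
  let φ i : N i →ₗ[A] M := (K i).subtype ∘ₗ (e i).some.toLinearMap
  have := h (ULift.{u} ℕ)
  obtain ⟨g, hg⟩ := Module.Injective.extension_property A _ _ _
    (DFinsupp.lsum ℕ fun i => (N i).subtype) hind.dfinsupp_lsum_injective
    (DFinsupp.lsum ℕ fun i => lsingle (ULift.up i) ∘ₗ φ i)
  have : Module.Finite A C := Module.finite_def.mpr (by
    obtain ⟨c, hc⟩ := hC
    exact hc ▸ Submodule.fg_span_singleton c)
  obtain ⟨T, hT⟩ := (Module.Finite.iff_fg.mp (Module.Finite.range g)).exists_le_supported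
  obtain ⟨j, hj⟩ := Infinite.exists_notMem_finset T
  obtain ⟨x, hx, hx0⟩ := Submodule.ne_bot_iff _ |>.mp (hne j.down)
  have hgx : g x = single j (φ j.down ⟨x, hx⟩) := by
    simpa using DFunLike.congr_fun hg (DFinsupp.single j.down ⟨x, hx⟩)
  have hgxj : g x j = 0 :=
    Finsupp.notMem_support_iff.mp fun hmem => hj ((mem_supported A _).mp (hT ⟨x, rfl⟩) hmem)
  rw [hgx, single_eq_same] at hgxj
  exact hx0 (by simpa [φ] using hgxj)

theorem QfdRelativeTo.finite_of_isSemisimpleModule {M D C : Type u} [AddCommGroup M] [Module A M]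
    [AddCommGroup D] [Module A D] [IsSemisimpleModule A D] [AddCommGroup C] [Module A C]
    (hq : QfdRelativeTo A M)
    (hsimple : ∀ N : Submodule A D, IsSimpleModule A N →
      ∃ K : Submodule A M, Nonempty (N ≃ₗ[A] K))
    (hC : Module.IsPrincipal A C) (e : D →ₗ[A] C) (he : Function.Injective e) :
    Module.Finite A D := by
  obtain ⟨s, hind, hsup, hs⟩ := IsSemisimpleModule.exists_sSupIndep_sSup_simples_eq_top A D
  by_contra hfin
  have hfinite_iff := (IsSemisimpleModule.finite_tfae (R := A) (M := D)).out 0 4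
  have hinf : s.Infinite := fun hs_fin => hfin (hfinite_iff.mpr ⟨s, hs_fin, hind, hsup, hs⟩)
  let ν := hinf.natEmbedding
  have hνs (k : ℕ) : IsSimpleModule A (ν k : Submodule A D) := hs _ (ν k).2
  refine hq C hC (fun k => (ν k : Submodule A D).map e)
    (e.iSupIndep_map he (((sSupIndep_iff s).mp hind).comp ν.injective)) (fun k => ?_) (fun k => ?_)
  · exact fun h => (Submodule.nontrivial_iff_ne_bot.mp (IsSimpleModule.nontrivial A _))
      (Submodule.map_injective_of_injective he (h.trans (Submodule.map_bot e).symm))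
  · obtain ⟨K, ⟨f⟩⟩ := hsimple _ (hνs k)
    exact ⟨K, ⟨(Submodule.equivMapOfInjective e he _).symm.trans f⟩⟩

theorem QfdRelativeTo.exists_finset_range_le_supported {S ι : Type u} [AddCommGroup S]
    [Module A S] [IsSemisimpleModule A S] [Module.Injective A S] (hq : QfdRelativeTo A S)
    {I : Ideal A} (f : I →ₗ[A] ι →₀ S) :
    ∃ T : Finset ι, range f ≤ supported S A (T : Set ι) := by
  obtain ⟨F, hF⟩ := Module.Baer.of_injective (inferInstance : Module.Injective A (ι → S)) I
    (lcoeFun ∘ₗ f)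
  let e : range f →ₗ[A] range F :=
    (lcoeFun ∘ₗ (range f).subtype).codRestrict (range F) <| by
      rintro ⟨_, x, rfl⟩
      exact ⟨x, hF x x.2⟩
  have he : Function.Injective e := fun x y hxy =>
    Subtype.ext (DFunLike.coe_injective (congrArg Subtype.val hxy))
  have hsimple (N : Submodule A (range f)) (hN : IsSimpleModule A N) :
      ∃ K : Submodule A S, Nonempty (N ≃ₗ[A] K) := by
    refine LinearMap.exists_submodule_linearEquiv_of_ne_zero (A := A) (N := N)
      ((range f).subtype ∘ₗ N.subtype) fun h => ?_
    have := IsSimpleModule.nontrivial A N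
    obtain ⟨x, hx⟩ := exists_ne (0 : N)
    exact hx (by simpa using LinearMap.congr_fun h x)
  have := QfdRelativeTo.finite_of_isSemisimpleModule hq hsimple
    (.of_surjective F.rangeRestrict F.surjective_rangeRestrict) e he
  exact (Module.Finite.iff_fg.mp this).exists_le_supported

theorem IsSigmaInjective.of_qfdRelativeTo {S : Type u} [AddCommGroup S] [Module A S]
    [IsSemisimpleModule A S] [Module.Injective A S] (hq : QfdRelativeTo A S) :
    IsSigmaInjective A S := by
  intro ι
  refine Module.Baer.injective fun I f => ?_
  obtain ⟨T, hT⟩ := QfdRelativeTo.exists_finset_range_le_supported hq f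
  have := Module.injective_supported_of_finite (A := A) (M := S) T.finite_toSet
  obtain ⟨g, hg⟩ := Module.Baer.of_injective this I (f.codRestrict _ fun x => hT ⟨x, rfl⟩)
  exact ⟨(supported S A (T : Set ι)).subtype ∘ₗ g,
    fun x hx => congrArg Subtype.val (hg x hx)⟩

end

/-- A ring `R` is a right Σ-V ring if and only if `R` is a right V-ring and `R` is
q.f.d. relative to every simple right `R`-module. -/
theorem rightSigmaV_iff_rightV_and_qfd (R : Type u) [Ring R] :
    IsRightSigmaVRing R ↔
      (IsRightVRing R ∧
        ∀ (S : Type u) [AddCommGroup S] [Module Rᵐᵒᵖ S],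
          IsSimpleModule Rᵐᵒᵖ S → QfdRelativeTo Rᵐᵒᵖ S) := by
  refine ⟨fun h => ⟨fun S _ _ hS => IsSigmaInjective.injective (h S hS),
    fun S _ _ hS => IsSigmaInjective.qfdRelativeTo (h S hS)⟩,
    fun ⟨hV, hq⟩ S _ _ hS => ?_⟩
  have := hV S hS
  exact IsSigmaInjective.of_qfdRelativeTo (hq S hS)
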